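/- Let n, k be positive integers and b ∈ {0,…,n−1}. The size of the Levenshtein code L_b(k,n) = {(s₁,…,s_k) ∈ {0,1}^k : ∑_{i=1}^{k} i·s_i ≡ b (mod n)} equals (2^k/n) ∑_{m=1}^{n} e(ηm/n) ∏_{j=1}^{k} cos(πjm/n), where η = −b + k(k+1)/4. -/

import Mathlib

open Complex Finset

noncomputable def e (x : ℂ) : ℂ := Complex.exp (2 * Real.pi * Complex.I * x)

/-- The Levenshtein code `L_b(k,n)`. -/
def Lev (k n b : ℕ) : Finset (Fin k → Fin 2) :=
  Finset.univ.filter fun s => (∑ i : Fin k, (i.val + 1) * (s i).val) % n = b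

lemma e_add (x y : ℂ) : e (x + y) = e x * e y := by
  simp [e, mul_add, Complex.exp_add]

lemma e_zero : e 0 = 1 := by simp [e]

lemma e_int (a : ℤ) : e a = 1 := by
  unfold e
  rw [show 2 * (Real.pi:ℂ) * I * a = (a:ℂ) * (2 * Real.pi * I) by ring]
  exact Complex.exp_int_mul_two_pi_mul_I a

lemma e_sum {α} (s : Finset α) (f : α → ℂ) : e (∑ i ∈ s, f i) = ∏ i ∈ s, e (f i) := by
  simp [e, Finset.mul_sum, Complex.exp_sum]

lemma e_nat_pow (x : ℂ) (m : ℕ) : e ((m : ℂ) * x) = e x ^ m := by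
  unfold e
  rw [show 2 * (Real.pi:ℂ) * I * ((m:ℂ) * x) = (m:ℂ) * (2 * Real.pi * I * x) by ring]
  exact Complex.exp_nat_mul _ m

lemma orth (n : ℕ) (hn : 1 ≤ n) (a : ℤ) :
    ∑ m ∈ Finset.range n, e ((a : ℂ) * m / n) = if (n:ℤ) ∣ a then (n:ℂ) else 0 := by
  have hn0 : (n:ℂ) ≠ 0 := Nat.cast_ne_zero.2 (by omega)
  by_cases h : (n:ℤ) ∣ a
  · obtain ⟨c, rfl⟩ := h
    rw [if_pos ⟨c, rfl⟩]
    have key : ∀ m ∈ range n, e (((((n:ℤ) * c : ℤ)):ℂ) * m / n) = 1 := by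
      intro m _
      have hx : ((((n:ℤ) * c : ℤ)):ℂ) * m / n = ((c * m : ℤ) : ℂ) := by
        push_cast; field_simp
      rw [hx, e_int]
    rw [Finset.sum_congr rfl key]
    simp
  · rw [if_neg h]
    have key : ∀ m : ℕ, e ((a:ℂ) * m / n) = e ((a:ℂ) / n) ^ m := by
      intro m
      rw [show (a:ℂ) * m / n = (m:ℂ) * ((a:ℂ)/n) by ring, e_nat_pow]
    have hne : e ((a:ℂ)/n) ≠ 1 := by
      intro hone
      unfold e at hone
      rw [Complex.exp_eq_one_iff] at hone
      obtain ⟨c, hc⟩ := hone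
      have hpi : (Real.pi : ℂ) ≠ 0 := by exact_mod_cast Real.pi_ne_zero
      have h2 : (2:ℂ) * Real.pi * I ≠ 0 := by simp [Complex.I_ne_zero, hpi]
      have h3 : (a:ℂ)/n = c := by
        apply mul_left_cancel₀ h2
        rw [hc]; ring
      have h4 : (a:ℂ) = (c:ℂ) * n := by
        field_simp at h3; exact h3.trans (mul_comm _ _)
      have h5 : a = c * n := by exact_mod_cast h4
      exact h ⟨c, by rw [h5, mul_comm]⟩
    have hpow : e ((a:ℂ)/n) ^ n = 1 := by
      rw [← e_nat_pow, show (n:ℂ) * ((a:ℂ)/n) = ((a:ℤ):ℂ) by field_simp, e_int]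
    rw [Finset.sum_congr rfl (fun m _ => key m), geom_sum_eq hne, hpow]
    simp

lemma one_add_e (r : ℝ) : (1:ℂ) + e r = 2 * (Real.cos (Real.pi * r) : ℂ) * e (r/2) := by
  unfold e
  rw [Complex.ofReal_cos]
  push_cast
  rw [show ((Real.pi:ℂ) * r) = ((Real.pi:ℂ) * r) by rfl]
  have h2 : (2:ℂ) * Complex.cos ((Real.pi:ℂ) * r) =
      Complex.exp (((Real.pi:ℂ) * r) * I) + Complex.exp (-((Real.pi:ℂ) * r) * I) :=
    Complex.two_cos _
  rw [show (2:ℂ) * Complex.cos ((Real.pi:ℂ)*r) * Complex.exp (2*(Real.pi:ℂ)*I*((r:ℂ)/2))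
      = ((2:ℂ) * Complex.cos ((Real.pi:ℂ)*r)) * Complex.exp (2*(Real.pi:ℂ)*I*((r:ℂ)/2)) by ring,
    h2, add_mul, ← Complex.exp_add, ← Complex.exp_add]
  rw [show ((Real.pi:ℂ) * r) * I + 2*(Real.pi:ℂ)*I*((r:ℂ)/2) = 2*(Real.pi:ℂ)*I*(r:ℂ) by ring,
    show -((Real.pi:ℂ) * r) * I + 2*(Real.pi:ℂ)*I*((r:ℂ)/2) = 0 by ring]
  simp [add_comm]

lemma gauss_c (k : ℕ) : ∑ i ∈ Finset.range k, ((i:ℂ) + 1) = (k:ℂ) * (k+1) / 2 := by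
  induction k with
  | zero => simp
  | succ k ih => rw [Finset.sum_range_succ, ih]; push_cast; ring

lemma cos_prod (n k m : ℕ) :
    ∏ i : Fin k, ((Real.cos (Real.pi * (((i:ℕ):ℝ)+1) * m / n)):ℂ)
      = ∏ j ∈ Finset.Icc 1 k, ((Real.cos (Real.pi * j * m / n)):ℂ) := by
  rw [Fin.prod_univ_eq_prod_range (fun i => ((Real.cos (Real.pi * ((i:ℝ)+1) * m / n)):ℂ)) k]
  rw [show Finset.Icc 1 k = Finset.Ico 1 (k+1) from by rw [Finset.Ico_add_one_right_eq_Icc]]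
  rw [Finset.prod_Ico_eq_prod_range]
  simp only [Nat.add_sub_cancel]
  apply Finset.prod_congr rfl
  intro i _
  congr 2
  push_cast
  ring

lemma gauss_icc (k : ℕ) : (∑ j ∈ Finset.Icc 1 k, j) * 2 = k * (k + 1) := by
  induction k with
  | zero => simp
  | succ k ih =>
    rw [Finset.sum_Icc_succ_top (by omega), add_mul, ih]
    ring

lemma factor_eq (n k : ℕ) (hn : 1 ≤ n) (b : ℕ) (η : ℂ)
    (hη : η = -(b : ℂ) + (k * (k + 1) : ℂ) / 4) (m : ℕ) :
    e (-(b:ℂ) * m / n) * ∏ i : Fin k, ((1:ℂ) + e ((((i:ℕ):ℂ)+1) * m / n))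
      = 2^k * (e (η * m / n) * ∏ j ∈ Finset.Icc 1 k, ((Real.cos (Real.pi * j * m / n)):ℂ)) := by
  have hterm : ∀ i : Fin k, (1:ℂ) + e ((((i:ℕ):ℂ)+1) * m / n)
      = 2 * ((Real.cos (Real.pi * (((i:ℕ):ℝ)+1) * m / n)):ℂ) * e ((((i:ℕ):ℂ)+1) * m / (2*n)) := by
    intro i
    have hr : (((i:ℕ):ℂ)+1) * m / n = ((((((i:ℕ):ℝ)+1) * (m:ℝ) / n) : ℝ) : ℂ) := by
      push_cast; ring
    rw [hr, one_add_e]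
    congr 2
    · congr 1; ring
    · push_cast; ring
  rw [Finset.prod_congr rfl (fun i _ => hterm i), Finset.prod_mul_distrib,
    Finset.prod_mul_distrib, Finset.prod_const, card_univ, Fintype.card_fin, ← e_sum,
    cos_prod]
  have hsum : ∑ i : Fin k, (((i:ℕ):ℂ)+1) * m / (2*n)
      = ((k:ℂ) * (k+1) / 2) * ((m:ℂ) / (2*n)) := by
    rw [Finset.sum_congr rfl (fun (i : Fin k) _ =>
      show (((i:ℕ):ℂ)+1) * m / (2*n) = (((i:ℕ):ℂ)+1) * ((m:ℂ)/(2*n)) from by ring),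
      ← Finset.sum_mul, Fin.sum_univ_eq_sum_range (fun i => ((i:ℂ)+1)) k, gauss_c]
  rw [hsum, hη]
  rw [show e (-(b:ℂ) * m / n) * (2^k * (∏ j ∈ Finset.Icc 1 k,
        ((Real.cos (Real.pi * j * m / n)):ℂ)) * e (((k:ℂ) * (k+1) / 2) * ((m:ℂ) / (2*n))))
      = 2^k * ((e (-(b:ℂ) * m / n) * e (((k:ℂ) * (k+1) / 2) * ((m:ℂ) / (2*n)))) *
        ∏ j ∈ Finset.Icc 1 k, ((Real.cos (Real.pi * j * m / n)):ℂ)) from by ring,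
    ← e_add]
  congr 2
  ring

lemma F_zero (n k : ℕ) (η : ℂ) :
    e (η * (0:ℕ) / n) * ∏ j ∈ Finset.Icc 1 k, ((Real.cos (Real.pi * j * (0:ℕ) / n)):ℂ) = 1 := by
  simp [e_zero]

lemma F_top (n k : ℕ) (hn : 1 ≤ n) (b : ℕ) (η : ℂ)
    (hη : η = -(b : ℂ) + (k * (k + 1) : ℂ) / 4) :
    e (η * (n:ℕ) / n) * ∏ j ∈ Finset.Icc 1 k, ((Real.cos (Real.pi * j * (n:ℕ) / n)):ℂ) = 1 := by
  have hn0 : (n:ℝ) ≠ 0 := Nat.cast_ne_zero.2 (by omega)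
  have hn0' : (n:ℂ) ≠ 0 := Nat.cast_ne_zero.2 (by omega)
  obtain ⟨K, hK⟩ : ∃ K, k * (k+1) = 2 * K := (Nat.even_mul_succ_self k).exists_two_nsmul _
  have hcos : ∀ j ∈ Finset.Icc 1 k, ((Real.cos (Real.pi * j * (n:ℕ) / n)):ℂ) = (-1)^j := by
    intro j _
    have : Real.pi * j * (n:ℕ) / n = (j:ℝ) * Real.pi - 0 := by field_simp; ring
    rw [this, Real.cos_nat_mul_pi_sub]
    push_cast; simp
  rw [Finset.prod_congr rfl hcos, Finset.prod_pow_eq_pow_sum]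
  have hS : ∑ j ∈ Finset.Icc 1 k, j = K := by
    have := gauss_icc k
    omega
  rw [hS]
  have harg : η * (n:ℕ) / n = -(b:ℂ) + (K:ℂ) / 2 := by
    rw [hη]
    field_simp
    rw [show ((k:ℂ) * ((k:ℂ)+1)) = ((k * (k+1) : ℕ) : ℂ) by push_cast; ring, hK]
    push_cast; ring
  rw [harg, e_add, show (-(b:ℂ)) = ((-(b:ℤ) : ℤ):ℂ) by push_cast; ring, e_int]
  have : e ((K:ℂ)/2) = (-1)^K := by
    unfold e
    rw [show 2 * (Real.pi:ℂ) * I * ((K:ℂ)/2) = (K:ℂ) * ((Real.pi:ℂ) * I) by ring,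
      Complex.exp_nat_mul, Complex.exp_pi_mul_I]
  rw [this]
  simp [← pow_add, ← two_mul]

lemma innerSumE (n k b m : ℕ) :
    ∑ s : Fin k → Fin 2,
        e (((((∑ i : Fin k, (i.val + 1) * (s i).val : ℕ):ℤ) - (b:ℤ) : ℤ):ℂ) * m / n)
      = e (-(b:ℂ) * m / n) * ∏ i : Fin k, ((1:ℂ) + e ((((i:ℕ):ℂ)+1) * m / n)) := by
  have step1 : ∀ s : Fin k → Fin 2,
      e (((((∑ i : Fin k, (i.val + 1) * (s i).val : ℕ):ℤ) - (b:ℤ) : ℤ):ℂ) * m / n)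
      = e (-(b:ℂ) * m / n) *
          ∏ i : Fin k, e ((((i:ℕ):ℂ)+1) * (((s i).val:ℕ):ℂ) * m / n) := by
    intro s
    rw [← e_sum, ← e_add]
    congr 1
    push_cast
    rw [sub_mul, sub_div, Finset.sum_mul, Finset.sum_div, sub_eq_neg_add]
    congr 1
    ring
  rw [Finset.sum_congr rfl (fun s _ => step1 s), ← Finset.mul_sum]
  congr 1
  have hps := Finset.prod_univ_sum (κ := fun _ : Fin k => Fin 2)
    (fun _ => (Finset.univ : Finset (Fin 2)))
    (fun i t => e ((((i:ℕ):ℂ)+1) * (((t:Fin 2).val:ℕ):ℂ) * m / n))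
  rw [Fintype.piFinset_univ] at hps
  rw [← hps]
  apply Finset.prod_congr rfl
  intro i _
  rw [Fin.sum_univ_two]
  norm_num [e_zero]

theorem stmt_18 (n k : ℕ) (hn : 1 ≤ n) (hk : 1 ≤ k) (b : ℕ) (hb : b < n)
    (η : ℂ) (hη : η = -(b : ℂ) + (k * (k + 1) : ℂ) / 4) :
    ((Lev k n b).card : ℂ) =
      (2 ^ k / n) * ∑ m ∈ Finset.Icc 1 n,
        e (η * m / n) * ∏ j ∈ Finset.Icc 1 k, (Real.cos (Real.pi * j * m / n) : ℂ) := by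
  have hn0 : (n:ℂ) ≠ 0 := Nat.cast_ne_zero.2 (by omega)
  have h1 : ((Lev k n b).card : ℂ) = ∑ s : Fin k → Fin 2,
      (if (∑ i : Fin k, (i.val + 1) * (s i).val) % n = b then (1:ℂ) else 0) := by
    rw [Lev, Finset.card_filter]
    push_cast
    rfl
  have h2 : ∀ S : ℕ, (if S % n = b then (1:ℂ) else 0)
      = (1/(n:ℂ)) * ∑ m ∈ Finset.range n, e ((((S:ℤ) - (b:ℤ) : ℤ):ℂ) * m / n) := by
    intro S
    rw [orth n hn]
    have hd : (S % n = b) ↔ ((n:ℤ) ∣ ((S:ℤ) - (b:ℤ))) := by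
      rw [dvd_sub_comm, ← Nat.modEq_iff_dvd]
      unfold Nat.ModEq
      rw [Nat.mod_eq_of_lt hb]
    by_cases h : S % n = b
    · rw [if_pos h, if_pos (hd.1 h)]
      field_simp
    · rw [if_neg h, if_neg (fun hh => h (hd.2 hh))]
      simp
  rw [h1, Finset.sum_congr rfl (fun s _ => h2 _), ← Finset.mul_sum, Finset.sum_comm]
  rw [Finset.sum_congr rfl (fun m _ => innerSumE n k b m)]
  rw [Finset.sum_congr rfl (fun m _ => factor_eq n k hn b η hη m), ← Finset.mul_sum]
  have hre : ∑ m ∈ Finset.range n,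
        (e (η * m / n) * ∏ j ∈ Finset.Icc 1 k, ((Real.cos (Real.pi * j * m / n)):ℂ))
      = ∑ m ∈ Finset.Icc 1 n,
        (e (η * m / n) * ∏ j ∈ Finset.Icc 1 k, ((Real.cos (Real.pi * j * m / n)):ℂ)) := by
    rw [Finset.range_eq_Ico, Finset.sum_eq_sum_Ico_succ_bot (by omega : 0 < n),
      show Finset.Icc 1 n = Finset.Ico 1 (n+1) from by rw [Finset.Ico_add_one_right_eq_Icc],
      Finset.sum_Ico_succ_top (by omega : 1 ≤ n)]
    rw [show ((0:ℕ):ℂ) = ((0:ℕ):ℂ) from rfl]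
    rw [F_zero n k η, F_top n k hn b η hη]
    rw [show (0:ℕ) + 1 = 1 from rfl]
    ring
  rw [hre]
  ring
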